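/- Fix ℓ ∈ ℕ₀ and θ ∈ ℝ, and let C₂(ℓ,θ) be the (2ℓ+1)×(2ℓ+1) tridiagonal matrix with diagonal entries sin(θ)·(ℓ−(j−1)) for j = 1,…,2ℓ+1, superdiagonal entries cos(θ)·k/2 and subdiagonal entries cos(θ)·(2ℓ+1−k)/2 for k = 1,…,2ℓ. Then the multiset of eigenvalues of C₂(ℓ,θ) is {0, ±1, ±2, …, ±ℓ}, independent of θ. -/

import Mathlib

/-!
With `s = sin θ` and `c = cos θ`, twice `C₂(ℓ,θ)` is the matrix, in the monomial basis of the
polynomials of degree `≤ 2ℓ`, of the operator `p ↦ 2ℓ (s + cX) p + (c - 2sX - cX²) p'`. This is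
the action of the reflection matrix `[[-s, c], [c, s]]` on binary forms of degree `2ℓ`, dehomogenised.
That matrix has eigenvalues `±1`, with linear eigenvectors `u` and `w`, and the operator acts on
`u ^ k * w ^ (2ℓ - k)` by the scalar `2 (ℓ - k)`. The `2ℓ + 1` distinct numbers `ℓ - k` are thus
eigenvalues of `C₂(ℓ,θ)`, hence all the roots of its characteristic polynomial.
-/

open Matrix

/-- The tridiagonal matrix `C₂(ℓ,θ)` (viewed over `ℂ`): diagonal entries
`sin θ · (ℓ-(j-1))`, superdiagonal `cos θ · k/2`, subdiagonal `cos θ · (2ℓ+1-k)/2`. -/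
noncomputable def C2 (ℓ : ℕ) (θ : ℝ) : Matrix (Fin (2 * ℓ + 1)) (Fin (2 * ℓ + 1)) ℂ :=
  Matrix.of fun i j =>
    if i = j then (Real.sin θ * ((ℓ : ℝ) - (i : ℕ)) : ℝ)
    else if (j : ℕ) = (i : ℕ) + 1 then (Real.cos θ * (((i : ℕ) + 1) / 2) : ℝ)
    else if (i : ℕ) = (j : ℕ) + 1 then (Real.cos θ * ((2 * (ℓ : ℝ) - (j : ℕ)) / 2) : ℝ)
    else 0

open Polynomial

theorem Matrix.isRoot_charpoly_of_mulVec_eq_smul {K n : Type*} [Field K] [Fintype n]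
    [DecidableEq n] {M : Matrix n n K} {μ : K} {v : n → K} (hv : v ≠ 0) (h : M *ᵥ v = μ • v) :
    M.charpoly.IsRoot μ := by
  rw [← Matrix.charpoly_toLin', ← Module.End.hasEigenvalue_iff_isRoot_charpoly]
  exact Module.End.hasEigenvalue_of_hasEigenvector ⟨Module.End.mem_eigenspace_iff.mpr h, hv⟩

theorem Matrix.charpoly_roots_eq_of_injective {K n : Type*} [Field K] [Fintype n] [DecidableEq n]
    (M : Matrix n n K) {f : n → K} (hf : Function.Injective f)
    (h : ∀ k, ∃ v ≠ 0, M *ᵥ v = f k • v) :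
    M.charpoly.roots = Finset.univ.val.map f := by
  have hnodup : (Finset.univ.val.map f).Nodup := Finset.univ.nodup.map hf
  refine (Multiset.eq_of_le_of_card_le ((Multiset.le_iff_subset hnodup).mpr ?_) ?_).symm
  · intro μ hμ
    obtain ⟨k, -, rfl⟩ := Multiset.mem_map.mp hμ
    obtain ⟨v, hv, hMv⟩ := h k
    exact (mem_roots M.charpoly_monic.ne_zero).mpr (isRoot_charpoly_of_mulVec_eq_smul hv hMv)
  · simpa [M.charpoly_natDegree_eq_dim] using M.charpoly.card_roots'

theorem Finset.sum_range_mul_of_tridiagonal {R : Type*} [CommRing R] {N i : ℕ} (hi : i < N)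
    {a : ℕ → ℕ → R} (ha : ∀ j, j ≠ i → j ≠ i + 1 → j + 1 ≠ i → a i j = 0) {c : ℕ → R}
    (hc : c N = 0) :
    ∑ j ∈ range N, a i j * c j
      = a i i * c i + a i (i + 1) * c (i + 1) + (if i = 0 then 0 else a i (i - 1) * c (i - 1)) := by
  have hsplit : ∀ j, a i j * c j = (if j = i then a i j * c j else 0)
      + (if j = i + 1 then a i j * c j else 0) + (if j + 1 = i then a i j * c j else 0) := by
    intro j
    by_cases h0 : j = i
    · subst h0; simp
    by_cases h1 : j = i + 1
    · subst h1; simp [show i + 1 + 1 ≠ i by omega]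
    by_cases h2 : j + 1 = i
    · simp [h0, h1, h2]
    simp [h0, h1, h2, ha j h0 h1 h2]
  have hnext : (if i + 1 < N then a i (i + 1) * c (i + 1) else 0) = a i (i + 1) * c (i + 1) := by
    split_ifs with h
    · rfl
    · rw [show i + 1 = N by omega, hc, mul_zero]
  rw [sum_congr rfl fun j _ => hsplit j]
  simp only [sum_add_distrib, sum_ite_eq', mem_range, if_pos hi, hnext]
  rcases i with _ | i
  · simp
  · simp [hi.trans' (Nat.lt_succ_self i)]

namespace Polynomial

section CommRing

variable {R : Type*} [CommRing R]

noncomputable def weightedDeriv (N : ℕ) (φ q p : R[X]) : R[X] :=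
  (N : R[X]) * φ * p + q * derivative p

theorem weightedDeriv_add_mul (M N : ℕ) (φ q p r : R[X]) :
    weightedDeriv (M + N) φ q (p * r) = weightedDeriv M φ q p * r + p * weightedDeriv N φ q r := by
  simp only [weightedDeriv, derivative_mul, Nat.cast_add]
  ring

theorem weightedDeriv_pow {φ q u : R[X]} {a : R} (hu : weightedDeriv 1 φ q u = C a * u) (k : ℕ) :
    weightedDeriv k φ q (u ^ k) = C (k * a) * u ^ k := by
  induction k with
  | zero => simp [weightedDeriv]
  | succ k ih =>
    rw [pow_succ, weightedDeriv_add_mul, ih, hu]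
    simp only [Nat.cast_succ, add_one_mul, map_add, map_mul, map_natCast]
    ring

theorem weightedDeriv_pow_mul_pow {φ q u w : R[X]} {a b : R}
    (hu : weightedDeriv 1 φ q u = C a * u) (hw : weightedDeriv 1 φ q w = C b * w) (k m : ℕ) :
    weightedDeriv (k + m) φ q (u ^ k * w ^ m) = C (k * a + m * b) * (u ^ k * w ^ m) := by
  rw [weightedDeriv_add_mul, weightedDeriv_pow hu, weightedDeriv_pow hw, C_add]
  ring

theorem coeff_weightedDeriv_reflection (N i : ℕ) (s c : R) (p : R[X]) :
    (weightedDeriv N (C s + C c * X) (C c - C (2 * s) * X - C c * X ^ 2) p).coeff i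
      = s * (N - 2 * i) * p.coeff i + c * (i + 1) * p.coeff (i + 1)
        + (if i = 0 then 0 else c * (N - (i - 1 : ℕ)) * p.coeff (i - 1)) := by
  rcases i with _ | _ | i <;>
    simp [weightedDeriv, coeff_derivative, sq, mul_assoc, add_mul, sub_mul, coeff_X_mul] <;> ring

end CommRing

theorem exists_linear_weightedDeriv_reflection_eq_C_mul {K : Type*} [Field K] {s c a : K}
    (hsc : s ^ 2 + c ^ 2 = 1) (ha : a ^ 2 = 1) :
    ∃ u : K[X], u ≠ 0 ∧ u.natDegree ≤ 1 ∧
      weightedDeriv 1 (C s + C c * X) (C c - C (2 * s) * X - C c * X ^ 2) u = C a * u := by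
  -- `C α * X + C β` is an eigenvector for `a` iff `(α, β)` is one of `!![-s, c; c, s]`.
  have hdet : (!![-s - a, c; c, s - a]).det = 0 := by
    rw [det_fin_two_of]
    linear_combination ha - hsc
  obtain ⟨v, hv, hker⟩ := exists_mulVec_eq_zero_iff.mpr hdet
  have h0 : C ((-s - a) * v 0 + c * v 1) = 0 := by
    simpa [mulVec, dotProduct, Fin.sum_univ_two] using congrArg C (congrFun hker 0)
  have h1 : C (c * v 0 + (s - a) * v 1) = 0 := by
    simpa [mulVec, dotProduct, Fin.sum_univ_two] using congrArg C (congrFun hker 1)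
  refine ⟨C (v 0) * X + C (v 1), ?_, natDegree_linear_le, ?_⟩
  · intro hu
    apply hv
    ext i
    fin_cases i
    · simpa using congrArg (coeff · 1) hu
    · simpa using congrArg (coeff · 0) hu
  · simp only [weightedDeriv, derivative_add, derivative_C_mul_X, derivative_C, add_zero,
      Nat.cast_one, one_mul]
    simp only [map_add, map_mul, map_sub, map_neg, map_ofNat] at h0 h1 ⊢
    linear_combination (X : K[X]) * h0 + h1

end Polynomial

theorem two_mul_C2_mulVec_coeff (ℓ : ℕ) (θ : ℝ) {p : ℂ[X]} (hp : p.natDegree ≤ 2 * ℓ)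
    (i : Fin (2 * ℓ + 1)) :
    2 * (C2 ℓ θ *ᵥ fun j => p.coeff j) i
      = (weightedDeriv (2 * ℓ) (C (Real.sin θ : ℂ) + C (Real.cos θ : ℂ) * X)
          (C (Real.cos θ : ℂ) - C (2 * Real.sin θ : ℂ) * X - C (Real.cos θ : ℂ) * X ^ 2)
          p).coeff i := by
  set a : ℕ → ℕ → ℂ := fun i j =>
    if i = j then (Real.sin θ * ((ℓ : ℝ) - i) : ℝ)
    else if j = i + 1 then (Real.cos θ * ((i + 1) / 2) : ℝ)
    else if i = j + 1 then (Real.cos θ * ((2 * (ℓ : ℝ) - j) / 2) : ℝ)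
    else 0
  have hentry : ∀ j, C2 ℓ θ i j = a i j := by
    intro j
    simp only [C2, of_apply, a, Fin.ext_iff]
  have htri : ∀ j : ℕ, j ≠ i → j ≠ i + 1 → j + 1 ≠ i → a i j = 0 := by
    intro j h0 h1 h2
    simp only [a]
    rw [if_neg (Ne.symm h0), if_neg h1, if_neg (Ne.symm h2)]
  have hlast : p.coeff (2 * ℓ + 1) = 0 := coeff_eq_zero_of_natDegree_lt (by omega)
  simp only [mulVec, dotProduct, hentry]
  rw [Fin.sum_univ_eq_sum_range (fun j => a i j * p.coeff j),
    Finset.sum_range_mul_of_tridiagonal i.isLt htri hlast, coeff_weightedDeriv_reflection]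
  rcases i with ⟨_ | i, hi⟩
  · simp [a]
    ring
  · simp [a, show i ≠ i + 1 + 1 by omega]
    ring

theorem exists_C2_mulVec_eq_smul (ℓ : ℕ) (θ : ℝ) {k : ℕ} (hk : k ≤ 2 * ℓ) :
    ∃ v ≠ 0, C2 ℓ θ *ᵥ v = ((ℓ : ℂ) - k) • v := by
  have hsc : (Real.sin θ : ℂ) ^ 2 + (Real.cos θ : ℂ) ^ 2 = 1 := by
    exact_mod_cast Real.sin_sq_add_cos_sq θ
  obtain ⟨u, hu0, hu1, hu⟩ :=
    exists_linear_weightedDeriv_reflection_eq_C_mul hsc (a := -1) (by norm_num)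
  obtain ⟨w, hw0, hw1, hw⟩ :=
    exists_linear_weightedDeriv_reflection_eq_C_mul hsc (a := 1) (by norm_num)
  set p := u ^ k * w ^ (2 * ℓ - k)
  have hp0 : p ≠ 0 := mul_ne_zero (pow_ne_zero _ hu0) (pow_ne_zero _ hw0)
  have hpdeg : p.natDegree ≤ 2 * ℓ := by
    have : p.natDegree ≤ k * 1 + (2 * ℓ - k) * 1 := natDegree_mul_le.trans
      (add_le_add (natDegree_pow_le_of_le k hu1) (natDegree_pow_le_of_le (2 * ℓ - k) hw1))
    omega
  have hp := weightedDeriv_pow_mul_pow hu hw k (2 * ℓ - k)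
  rw [Nat.add_sub_cancel' hk] at hp
  refine ⟨fun j => p.coeff j, fun h => hp0 (ext fun n => ?_), funext fun i => ?_⟩
  · rcases lt_or_ge n (2 * ℓ + 1) with hn | hn
    · exact congrFun h ⟨n, hn⟩
    · exact coeff_eq_zero_of_natDegree_lt (by omega)
  · have hi := two_mul_C2_mulVec_coeff ℓ θ hpdeg i
    rw [hp, coeff_C_mul] at hi
    push_cast [Nat.cast_sub hk] at hi
    simp only [Pi.smul_apply, smul_eq_mul]
    linear_combination hi / 2

/-- The multiset of eigenvalues of `C₂(ℓ,θ)` is `{0, ±1, …, ±ℓ}`, independently of `θ`. -/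
theorem stmt15 (ℓ : ℕ) (θ : ℝ) :
    (C2 ℓ θ).charpoly.roots =
      Multiset.map (fun j : Fin (2 * ℓ + 1) => ((ℓ : ℂ) - (j : ℕ)))
        Finset.univ.val := by
  refine (C2 ℓ θ).charpoly_roots_eq_of_injective (fun j₁ j₂ h => ?_)
    fun k => exists_C2_mulVec_eq_smul ℓ θ (by omega)
  exact Fin.ext (Nat.cast_injective (sub_right_injective h))
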